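/- arXiv:1109.1919 — 3 statements merged into one kernel-verified Lean document; each statement's English description precedes it below -/
import Mathlib

section
/- Composition of gauge transformations: if (f, c) : (x, g, a) → (x', g', a') and (f', c') : (x', g', a') → (x'', g'', a'') are gauge transformations between descent data in a cosimplicial crossed groupoid G, then (f' ∘ f, c ∘ Ad(f_{(0)}⁻¹)(c')) is a gauge transformation (x, g, a) → (x'', g'', a''). -/
/-! Crossed groupoids (= crossed modules over groupoids), following Yekutieli,
"Combinatorial descent data for gerbes". -/

structure CrossedGroupoid : Type 1 where
  Obj : Type
  Hom : Obj → Obj → Type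
  id : ∀ x, Hom x x
  comp : ∀ {x y z}, Hom y z → Hom x y → Hom x z
  inv : ∀ {x y}, Hom x y → Hom y x
  comp_assoc : ∀ {x y z w} (h : Hom z w) (g : Hom y z) (f : Hom x y),
    comp (comp h g) f = comp h (comp g f)
  id_comp : ∀ {x y} (f : Hom x y), comp (id y) f = f
  comp_id : ∀ {x y} (f : Hom x y), comp f (id x) = f
  inv_comp : ∀ {x y} (f : Hom x y), comp (inv f) f = id x
  comp_inv : ∀ {x y} (f : Hom x y), comp f (inv f) = id y
  -- the totally disconnected groupoid 𝒢₂, i.e. a family of groups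
  G2 : Obj → Type
  mul : ∀ {x}, G2 x → G2 x → G2 x
  one : ∀ x, G2 x
  inv2 : ∀ {x}, G2 x → G2 x
  mul_assoc : ∀ {x} (a b c : G2 x), mul (mul a b) c = mul a (mul b c)
  one_mul : ∀ {x} (a : G2 x), mul (one x) a = a
  mul_one : ∀ {x} (a : G2 x), mul a (one x) = a
  inv2_mul : ∀ {x} (a : G2 x), mul (inv2 a) a = one x
  -- the twisting: an action of 𝒢₁ on 𝒢₂
  Ad : ∀ {x y}, Hom x y → G2 x → G2 y
  Ad_mul : ∀ {x y} (g : Hom x y) (a b : G2 x), Ad g (mul a b) = mul (Ad g a) (Ad g b)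
  Ad_one : ∀ {x y} (g : Hom x y), Ad g (one x) = one y
  Ad_id : ∀ {x} (a : G2 x), Ad (id x) a = a
  Ad_comp : ∀ {x y z} (h : Hom y z) (g : Hom x y) (a : G2 x),
    Ad (comp h g) a = Ad h (Ad g a)
  -- the feedback D : 𝒢₂ → 𝒢₁, identity on objects
  D : ∀ {x}, G2 x → Hom x x
  D_mul : ∀ {x} (a b : G2 x), D (mul a b) = comp (D a) (D b)
  D_one : ∀ x, D (one x) = id x
  -- equivariance of the feedback
  D_Ad : ∀ {x y} (g : Hom x y) (a : G2 x), D (Ad g a) = comp (comp g (D a)) (inv g)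
  -- Peiffer condition
  peiffer : ∀ {x} (a b : G2 x), Ad (D a) b = mul (mul a b) (inv2 a)

namespace CrossedGroupoid

/-- Transport of 1-morphisms along equalities of objects. -/
def hcast (G : CrossedGroupoid) {x x' y y' : G.Obj} (ex : x = x') (ey : y = y')
    (f : G.Hom x y) : G.Hom x' y' := ey ▸ ex ▸ f

/-- Transport of 2-morphisms along an equality of objects. -/
def cast2 (G : CrossedGroupoid) {x x' : G.Obj} (e : x = x') (a : G.G2 x) : G.G2 x' := e ▸ a

/-- The relation "isomorphic in 𝒢₁". -/
def pi0Rel (G : CrossedGroupoid) : G.Obj → G.Obj → Prop := fun x y => Nonempty (G.Hom x y)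

/-- π₀ of a crossed groupoid: isomorphism classes of objects of 𝒢₁. -/
def pi0 (G : CrossedGroupoid) : Type := Quot G.pi0Rel

/-- The right action relation on a hom-set: g' = g ∘ D(a). -/
def homRel (G : CrossedGroupoid) (x x' : G.Obj) : G.Hom x x' → G.Hom x x' → Prop :=
  fun g g' => ∃ a : G.G2 x, g' = G.comp g (G.D a)

/-- π₁(G, x, x') := 𝒢₁(x,x') / 𝒢₂(x). -/
def pi1' (G : CrossedGroupoid) (x x' : G.Obj) : Type := Quot (G.homRel x x')

/-- π₁(G, x) = Coker(D : 𝒢₂(x) → 𝒢₁(x)) as a quotient set. -/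
def pi1 (G : CrossedGroupoid) (x : G.Obj) : Type := G.pi1' x x

/-- π₂(G, x) = Ker(D : 𝒢₂(x) → 𝒢₁(x)). -/
def pi2 (G : CrossedGroupoid) (x : G.Obj) : Type := {a : G.G2 x // G.D a = G.id x}

end CrossedGroupoid

/-- A morphism of crossed groupoids. -/
structure CrossedGroupoidHom (G H : CrossedGroupoid) where
  obj : G.Obj → H.Obj
  map1 : ∀ {x y : G.Obj}, G.Hom x y → H.Hom (obj x) (obj y)
  map2 : ∀ {x : G.Obj}, G.G2 x → H.G2 (obj x)
  map1_comp : ∀ {x y z : G.Obj} (g : G.Hom y z) (f : G.Hom x y),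
    map1 (G.comp g f) = H.comp (map1 g) (map1 f)
  map1_id : ∀ x : G.Obj, map1 (G.id x) = H.id (obj x)
  map2_mul : ∀ {x : G.Obj} (a b : G.G2 x), map2 (G.mul a b) = H.mul (map2 a) (map2 b)
  map_D : ∀ {x : G.Obj} (a : G.G2 x), map1 (G.D a) = H.D (map2 a)
  map_Ad : ∀ {x y : G.Obj} (g : G.Hom x y) (a : G.G2 x),
    map2 (G.Ad g a) = H.Ad (map1 g) (map2 a)

namespace CrossedGroupoidHom

/-- Identity morphism of crossed groupoids. -/
def id (G : CrossedGroupoid) : CrossedGroupoidHom G G where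
  obj := fun x => x
  map1 := fun f => f
  map2 := fun a => a
  map1_comp := fun _ _ => rfl
  map1_id := fun _ => rfl
  map2_mul := fun _ _ => rfl
  map_D := fun _ => rfl
  map_Ad := fun _ _ => rfl

/-- Composition of morphisms of crossed groupoids. -/
def comp {G H K : CrossedGroupoid} (F₂ : CrossedGroupoidHom H K) (F₁ : CrossedGroupoidHom G H) :
    CrossedGroupoidHom G K where
  obj := fun x => F₂.obj (F₁.obj x)
  map1 := fun f => F₂.map1 (F₁.map1 f)
  map2 := fun a => F₂.map2 (F₁.map2 a)
  map1_comp := fun g f => by (try dsimp only); rw [F₁.map1_comp, F₂.map1_comp]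
  map1_id := fun x => by (try dsimp only); rw [F₁.map1_id, F₂.map1_id]
  map2_mul := fun a b => by (try dsimp only); rw [F₁.map2_mul, F₂.map2_mul]
  map_D := fun a => by (try dsimp only); rw [F₁.map_D, F₂.map_D]
  map_Ad := fun g a => by (try dsimp only); rw [F₁.map_Ad, F₂.map_Ad]

variable {G H : CrossedGroupoid}

/-- The induced map on π₀. -/
def pi0map (F : CrossedGroupoidHom G H) : G.pi0 → H.pi0 :=
  Quot.map F.obj (fun _ _ h => ⟨F.map1 h.some⟩)

/-- The induced map on π₁(−, x, x'). -/
def pi1'map (F : CrossedGroupoidHom G H) (x x' : G.Obj) :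
    G.pi1' x x' → H.pi1' (F.obj x) (F.obj x') :=
  Quot.map F.map1 (by
    rintro g g' ⟨a, rfl⟩
    exact ⟨F.map2 a, by rw [F.map1_comp, F.map_D]⟩)

/-- The induced map on π₁(−, x). -/
def pi1map (F : CrossedGroupoidHom G H) (x : G.Obj) : G.pi1 x → H.pi1 (F.obj x) :=
  F.pi1'map x x

/-- The induced map on π₂(−, x). -/
def pi2map (F : CrossedGroupoidHom G H) (x : G.Obj) : G.pi2 x → H.pi2 (F.obj x) :=
  fun a => ⟨F.map2 a.1, by rw [← F.map_D, a.2, F.map1_id]⟩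

/-- A weak equivalence of crossed groupoids: bijective on π₀, π₁ and π₂. -/
def IsWeakEquiv (F : CrossedGroupoidHom G H) : Prop :=
  Function.Bijective F.pi0map ∧ (∀ x, Function.Bijective (F.pi1map x)) ∧
    (∀ x, Function.Bijective (F.pi2map x))

end CrossedGroupoidHom

/-! ### Combinatorics of the simplex category -/

/-- The vertex (i) of Δ^q, as a monotone map Δ⁰ → Δ^q. -/
def vtxMap {q : ℕ} (i : Fin (q + 1)) : Fin 1 →o Fin (q + 1) :=
  ⟨fun _ => i, fun _ _ _ => le_rfl⟩

/-- The edge (i,j) of Δ^q, as a monotone map Δ¹ → Δ^q. -/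
def edgeMap {q : ℕ} (i j : Fin (q + 1)) (h : i ≤ j) : Fin 2 →o Fin (q + 1) :=
  ⟨fun k => if (k : ℕ) = 0 then i else j, by
    intro a b hab
    have hab' : (a : ℕ) ≤ (b : ℕ) := hab
    show (if (a : ℕ) = 0 then i else j) ≤ (if (b : ℕ) = 0 then i else j)
    by_cases ha : (a : ℕ) = 0
    · by_cases hb : (b : ℕ) = 0
      · rw [if_pos ha, if_pos hb]
      · rw [if_pos ha, if_neg hb]; exact h
    · have hb : ¬ (b : ℕ) = 0 := fun hb0 => ha (Nat.le_zero.mp (hb0 ▸ hab'))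
      rw [if_neg ha, if_neg hb]⟩

/-- The triangle (i,j,k) of Δ^q, as a monotone map Δ² → Δ^q. -/
def triMap {q : ℕ} (i j k : Fin (q + 1)) (hij : i ≤ j) (hjk : j ≤ k) :
    Fin 3 →o Fin (q + 1) :=
  ⟨fun m => if (m : ℕ) = 0 then i else if (m : ℕ) = 1 then j else k, by
    intro a b hab
    have hab' : (a : ℕ) ≤ (b : ℕ) := hab
    show (if (a : ℕ) = 0 then i else if (a : ℕ) = 1 then j else k) ≤
      (if (b : ℕ) = 0 then i else if (b : ℕ) = 1 then j else k)
    by_cases ha0 : (a : ℕ) = 0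
    · by_cases hb0 : (b : ℕ) = 0
      · rw [if_pos ha0, if_pos hb0]
      · by_cases hb1 : (b : ℕ) = 1
        · rw [if_pos ha0, if_neg hb0, if_pos hb1]; exact hij
        · rw [if_pos ha0, if_neg hb0, if_neg hb1]; exact hij.trans hjk
    · by_cases ha1 : (a : ℕ) = 1
      · have hb0 : ¬ (b : ℕ) = 0 := by omega
        by_cases hb1 : (b : ℕ) = 1
        · rw [if_neg ha0, if_pos ha1, if_neg hb0, if_pos hb1]
        · rw [if_neg ha0, if_pos ha1, if_neg hb0, if_neg hb1]; exact hjk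
      · have hb0 : ¬ (b : ℕ) = 0 := by omega
        have hb1 : ¬ (b : ℕ) = 1 := by omega
        rw [if_neg ha0, if_neg ha1, if_neg hb0, if_neg hb1]⟩

theorem comp_vtxMap {p q : ℕ} (α : Fin (p + 1) →o Fin (q + 1)) (i : Fin (p + 1)) :
    α.comp (vtxMap i) = vtxMap (α i) := rfl

/-! ### Cosimplicial crossed groupoids -/

/-- A cosimplicial crossed groupoid: a functor Δ → CrGrpd. -/
structure CosimplicialCrossedGroupoid : Type 1 where
  obj : ℕ → CrossedGroupoid
  map : ∀ {p q : ℕ}, (Fin (p + 1) →o Fin (q + 1)) → CrossedGroupoidHom (obj p) (obj q)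
  map_id : ∀ p, map (OrderHom.id : Fin (p + 1) →o Fin (p + 1)) = CrossedGroupoidHom.id (obj p)
  map_comp : ∀ {p q r : ℕ} (β : Fin (q + 1) →o Fin (r + 1)) (α : Fin (p + 1) →o Fin (q + 1)),
    map (β.comp α) = (map β).comp (map α)

namespace CosimplicialCrossedGroupoid

variable (G : CosimplicialCrossedGroupoid)

theorem obj_comp {p q r : ℕ} (β : Fin (q + 1) →o Fin (r + 1)) (α : Fin (p + 1) →o Fin (q + 1))
    (x : (G.obj p).Obj) :
    (G.map β).obj ((G.map α).obj x) = (G.map (β.comp α)).obj x := by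
  rw [G.map_comp]; rfl

/-- The object x of G⁰ pushed to the vertex (i) of Δ^q. -/
def X (x : (G.obj 0).Obj) (q : ℕ) (i : Fin (q + 1)) : (G.obj q).Obj :=
  (G.map (vtxMap i)).obj x

theorem X_push (x : (G.obj 0).Obj) {p q : ℕ} (α : Fin (p + 1) →o Fin (q + 1))
    (i : Fin (p + 1)) : (G.map α).obj (G.X x p i) = G.X x q (α i) := by
  unfold X
  rw [obj_comp, comp_vtxMap]

/-- Pushing a 1-morphism between vertex objects along α. -/
def push1 {x : (G.obj 0).Obj} {p q : ℕ} (α : Fin (p + 1) →o Fin (q + 1))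
    {i j : Fin (p + 1)} (g : (G.obj p).Hom (G.X x p i) (G.X x p j)) :
    (G.obj q).Hom (G.X x q (α i)) (G.X x q (α j)) :=
  (G.obj q).hcast (G.X_push x α i) (G.X_push x α j) ((G.map α).map1 g)

/-- Pushing a 2-morphism at a vertex object along α. -/
def push2 {x : (G.obj 0).Obj} {p q : ℕ} (α : Fin (p + 1) →o Fin (q + 1))
    {i : Fin (p + 1)} (a : (G.obj p).G2 (G.X x p i)) :
    (G.obj q).G2 (G.X x q (α i)) :=
  (G.obj q).cast2 (G.X_push x α i) ((G.map α).map2 a)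

/-- Yekutieli's combinatorial descent conditions (Definition 1.5):
the failure-of-1-cocycle condition and the twisted 2-cocycle condition. -/
def IsDescent (x : (G.obj 0).Obj)
    (g : (G.obj 1).Hom (G.X x 1 0) (G.X x 1 1))
    (a : (G.obj 2).G2 (G.X x 2 0)) : Prop :=
  ((G.obj 2).comp ((G.obj 2).comp ((G.obj 2).inv (G.push1 (edgeMap 0 2 (by decide)) g))
      (G.push1 (edgeMap 1 2 (by decide)) g)) (G.push1 (edgeMap 0 1 (by decide)) g)
    = (G.obj 2).D a)
  ∧
  ((G.obj 3).mul ((G.obj 3).mul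
        ((G.obj 3).inv2 (G.push2 (triMap 0 1 3 (by decide) (by decide)) a))
        (G.push2 (triMap 0 2 3 (by decide) (by decide)) a))
      (G.push2 (triMap 0 1 2 (by decide) (by decide)) a)
    = (G.obj 3).Ad ((G.obj 3).inv (G.push1 (edgeMap 0 1 (by decide)) g))
        (G.push2 (triMap 1 2 3 (by decide) (by decide)) a))

/-- A combinatorial descent datum (Definition 1.5). -/
structure Desc (G : CosimplicialCrossedGroupoid) where
  x : (G.obj 0).Obj
  g : (G.obj 1).Hom (G.X x 1 0) (G.X x 1 1)
  a : (G.obj 2).G2 (G.X x 2 0)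
  isDescent : G.IsDescent x g a

/-- The Yekutieli gauge-transformation conditions (Definition 1.7) for a pair (f, c). -/
def IsGauge (x : (G.obj 0).Obj) (g : (G.obj 1).Hom (G.X x 1 0) (G.X x 1 1))
    (a : (G.obj 2).G2 (G.X x 2 0))
    (x' : (G.obj 0).Obj) (g' : (G.obj 1).Hom (G.X x' 1 0) (G.X x' 1 1))
    (a' : (G.obj 2).G2 (G.X x' 2 0))
    (f : (G.obj 0).Hom x x') (c : (G.obj 1).G2 (G.X x 1 0)) : Prop :=
  (g' = (G.obj 1).comp ((G.obj 1).comp ((G.obj 1).comp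
      ((G.map (vtxMap (1 : Fin 2))).map1 f) g) ((G.obj 1).D c))
      ((G.obj 1).inv ((G.map (vtxMap (0 : Fin 2))).map1 f)))
  ∧
  (a' = (G.obj 2).Ad ((G.map (vtxMap (0 : Fin 3))).map1 f)
    ((G.obj 2).mul ((G.obj 2).mul ((G.obj 2).mul
        ((G.obj 2).inv2 (G.push2 (edgeMap 0 2 (by decide)) c)) a)
        ((G.obj 2).Ad ((G.obj 2).inv (G.push1 (edgeMap 0 1 (by decide)) g))
          (G.push2 (edgeMap 1 2 (by decide)) c)))
      (G.push2 (edgeMap 0 1 (by decide)) c)))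

/-- Gauge equivalence of descent data. -/
def GaugeEquiv (P Q : G.Desc) : Prop :=
  ∃ (f : (G.obj 0).Hom P.x Q.x) (c : (G.obj 1).G2 (G.X P.x 1 0)),
    G.IsGauge P.x P.g P.a Q.x Q.g Q.a f c

/-- The explicit formula for the transported 2-morphism a'
(Definition 1.7(ii) / Lemma 1.9). -/
def transportA {x x' : (G.obj 0).Obj} (f : (G.obj 0).Hom x x')
    (g : (G.obj 1).Hom (G.X x 1 0) (G.X x 1 1))
    (a : (G.obj 2).G2 (G.X x 2 0)) (c : (G.obj 1).G2 (G.X x 1 0)) :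
    (G.obj 2).G2 (G.X x' 2 0) :=
  (G.obj 2).Ad ((G.map (vtxMap (0 : Fin 3))).map1 f)
    ((G.obj 2).mul ((G.obj 2).mul ((G.obj 2).mul
        ((G.obj 2).inv2 (G.push2 (edgeMap 0 2 (by decide)) c)) a)
        ((G.obj 2).Ad ((G.obj 2).inv (G.push1 (edgeMap 0 1 (by decide)) g))
          (G.push2 (edgeMap 1 2 (by decide)) c)))
      (G.push2 (edgeMap 0 1 (by decide)) c))

end CosimplicialCrossedGroupoid

/-- A morphism of cosimplicial crossed groupoids. -/
structure CosimplicialMor (G H : CosimplicialCrossedGroupoid) where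
  app : ∀ p, CrossedGroupoidHom (G.obj p) (H.obj p)
  naturality : ∀ {p q : ℕ} (α : Fin (p + 1) →o Fin (q + 1)),
    (app q).comp (G.map α) = (H.map α).comp (app p)

namespace CosimplicialMor

variable {G H : CosimplicialCrossedGroupoid}

theorem app_X (F : CosimplicialMor G H) (x : (G.obj 0).Obj) (q : ℕ) (i : Fin (q + 1)) :
    (F.app q).obj (G.X x q i) = H.X ((F.app 0).obj x) q i :=
  congrFun (congrArg CrossedGroupoidHom.obj (F.naturality (vtxMap i))) x

/-- Image of an object of G⁰. -/
def objD (F : CosimplicialMor G H) (x : (G.obj 0).Obj) : (H.obj 0).Obj := (F.app 0).obj x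

/-- Image of a 1-morphism in dimension 0. -/
def mapF (F : CosimplicialMor G H) {x x' : (G.obj 0).Obj} (f : (G.obj 0).Hom x x') :
    (H.obj 0).Hom (F.objD x) (F.objD x') := (F.app 0).map1 f

/-- Image of the 1-morphism part of a descent datum. -/
def mapG (F : CosimplicialMor G H) {x : (G.obj 0).Obj}
    (g : (G.obj 1).Hom (G.X x 1 0) (G.X x 1 1)) :
    (H.obj 1).Hom (H.X (F.objD x) 1 0) (H.X (F.objD x) 1 1) :=
  (H.obj 1).hcast (F.app_X x 1 0) (F.app_X x 1 1) ((F.app 1).map1 g)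

/-- Image of the 2-morphism part of a descent datum. -/
def mapA (F : CosimplicialMor G H) {x : (G.obj 0).Obj} (a : (G.obj 2).G2 (G.X x 2 0)) :
    (H.obj 2).G2 (H.X (F.objD x) 2 0) :=
  (H.obj 2).cast2 (F.app_X x 2 0) ((F.app 2).map2 a)

/-- Image of the 2-morphism part of a gauge transformation. -/
def mapC (F : CosimplicialMor G H) {x : (G.obj 0).Obj} (c : (G.obj 1).G2 (G.X x 1 0)) :
    (H.obj 1).G2 (H.X (F.objD x) 1 0) :=
  (H.obj 1).cast2 (F.app_X x 1 0) ((F.app 1).map2 c)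

/-- A weak equivalence of cosimplicial crossed groupoids. -/
def IsWeakEquiv (F : CosimplicialMor G H) : Prop := ∀ p, (F.app p).IsWeakEquiv

end CosimplicialMor

/-! Both conditions on a gauge transformation are instances of two actions inside one crossed
groupoid, `g ↦ F₁ ∘ g ∘ D(c) ∘ F₀⁻¹` on morphisms (`gauge1`) and
`a ↦ Ad(F₀)(c₀₂⁻¹ a Ad(g⁻¹)(c₁₂) c₀₁)` on 2-morphisms (`gauge2`), evaluated on the faces of
`(f, c)` in degrees 1 and 2. Each action composes as claimed: for `gauge1` one moves `F₀⁻¹` past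
`D(c')` using `D ∘ Ad(h) = conjugation by h`, for `gauge2` the Peiffer identity
`Ad(D a) = conjugation by a` turns everything into a group word. Pushing along maps of the simplex
category commutes with all of the structure, so the statement reduces to these two identities. -/

namespace CrossedGroupoid

variable {G : CrossedGroupoid}

instance (x : G.Obj) : Mul (G.G2 x) := ⟨G.mul⟩

instance (x : G.Obj) : One (G.G2 x) := ⟨G.one x⟩

instance (x : G.Obj) : Inv (G.G2 x) := ⟨G.inv2⟩

instance (x : G.Obj) : Group (G.G2 x) :=
  Group.ofLeftAxioms G.mul_assoc G.one_mul G.inv2_mul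

theorem Ad_mul' {x y : G.Obj} (g : G.Hom x y) (a b : G.G2 x) :
    G.Ad g (a * b) = G.Ad g a * G.Ad g b :=
  G.Ad_mul g a b

theorem D_mul' {x : G.Obj} (a b : G.G2 x) : G.D (a * b) = G.comp (G.D a) (G.D b) :=
  G.D_mul a b

theorem inv_eq_of_comp_eq_id_left {x y : G.Obj} {f : G.Hom x y} {g : G.Hom y x}
    (h : G.comp g f = G.id x) : G.inv f = g := by
  rw [← G.id_comp (G.inv f), ← h, G.comp_assoc, G.comp_inv, G.comp_id]

theorem inv_inv {x y : G.Obj} (f : G.Hom x y) : G.inv (G.inv f) = f :=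
  inv_eq_of_comp_eq_id_left (G.comp_inv f)

theorem inv_comp_rev {x y z : G.Obj} (g : G.Hom y z) (f : G.Hom x y) :
    G.inv (G.comp g f) = G.comp (G.inv f) (G.inv g) := by
  apply inv_eq_of_comp_eq_id_left
  rw [G.comp_assoc, ← G.comp_assoc (G.inv g), G.inv_comp, G.id_comp, G.inv_comp]

theorem comp_inv_cancel_left {x y z : G.Obj} (g : G.Hom y z) (f : G.Hom x z) :
    G.comp g (G.comp (G.inv g) f) = f := by
  rw [← G.comp_assoc, G.comp_inv, G.id_comp]

theorem Ad_inv {x y : G.Obj} (g : G.Hom x y) (a : G.G2 x) :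
    G.Ad g a⁻¹ = (G.Ad g a)⁻¹ :=
  map_inv (MonoidHom.mk' (G.Ad g) (G.Ad_mul g)) a

theorem Ad_Ad_inv {x y : G.Obj} (g : G.Hom x y) (a : G.G2 y) :
    G.Ad g (G.Ad (G.inv g) a) = a := by
  rw [← G.Ad_comp, G.comp_inv, G.Ad_id]

theorem D_inv {x : G.Obj} (a : G.G2 x) : G.D a⁻¹ = G.inv (G.D a) := by
  refine (inv_eq_of_comp_eq_id_left ?_).symm
  rw [← D_mul', inv_mul_cancel]
  exact G.D_one x

theorem Ad_D {x : G.Obj} (a b : G.G2 x) : G.Ad (G.D a) b = a * b * a⁻¹ :=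
  G.peiffer a b

theorem cast2_mul {x x' : G.Obj} (e : x = x') (a b : G.G2 x) :
    G.cast2 e (a * b) = G.cast2 e a * G.cast2 e b := by
  subst e; rfl

theorem cast2_Ad {x x' y y' : G.Obj} (ex : x = x') (ey : y = y') (g : G.Hom x y) (a : G.G2 x) :
    G.cast2 ey (G.Ad g a) = G.Ad (G.hcast ex ey g) (G.cast2 ex a) := by
  subst ex ey; rfl

theorem hcast_comp {x x' y y' z z' : G.Obj} (ex : x = x') (ey : y = y') (ez : z = z')
    (g : G.Hom y z) (f : G.Hom x y) :
    G.hcast ex ez (G.comp g f) = G.comp (G.hcast ey ez g) (G.hcast ex ey f) := by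
  subst ex ey ez; rfl

theorem hcast_inv {x x' y y' : G.Obj} (ex : x = x') (ey : y = y') (f : G.Hom x y) :
    G.hcast ey ex (G.inv f) = G.inv (G.hcast ex ey f) := by
  subst ex ey; rfl

theorem hcast_D {x x' : G.Obj} (e : x = x') (a : G.G2 x) :
    G.hcast e e (G.D a) = G.D (G.cast2 e a) := by
  subst e; rfl

def gauge1 {u₀ u₁ v₀ v₁ : G.Obj} (F₀ : G.Hom u₀ v₀) (F₁ : G.Hom u₁ v₁) (g : G.Hom u₀ u₁)
    (c : G.G2 u₀) : G.Hom v₀ v₁ :=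
  G.comp (G.comp (G.comp F₁ g) (G.D c)) (G.inv F₀)

def gauge2 {u₀ u₁ v₀ : G.Obj} (F₀ : G.Hom u₀ v₀) (g : G.Hom u₀ u₁) (a : G.G2 u₀)
    (c₀₂ : G.G2 u₀) (c₁₂ : G.G2 u₁) (c₀₁ : G.G2 u₀) : G.G2 v₀ :=
  G.Ad F₀ (c₀₂⁻¹ * a * G.Ad (G.inv g) c₁₂ * c₀₁)

theorem gauge1_gauge1 {u₀ u₁ v₀ v₁ w₀ w₁ : G.Obj} (F₀ : G.Hom u₀ v₀) (F₁ : G.Hom u₁ v₁)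
    (F₀' : G.Hom v₀ w₀) (F₁' : G.Hom v₁ w₁) (g : G.Hom u₀ u₁) (c : G.G2 u₀) (c' : G.G2 v₀) :
    G.gauge1 F₀' F₁' (G.gauge1 F₀ F₁ g c) c'
      = G.gauge1 (G.comp F₀' F₀) (G.comp F₁' F₁) g (c * G.Ad (G.inv F₀) c') := by
  simp only [gauge1, D_mul', G.D_Ad, inv_inv, inv_comp_rev, G.comp_assoc, comp_inv_cancel_left]

theorem gauge2_gauge2 {u₀ u₁ v₀ v₁ w₀ : G.Obj} (F₀ : G.Hom u₀ v₀) (F₁ : G.Hom u₁ v₁)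
    (F₀' : G.Hom v₀ w₀) (g : G.Hom u₀ u₁) (a c₀₂ c₀₁ : G.G2 u₀) (c₁₂ : G.G2 u₁)
    (d₀₂ d₀₁ : G.G2 v₀) (d₁₂ : G.G2 v₁) :
    G.gauge2 F₀' (G.gauge1 F₀ F₁ g c₀₁) (G.gauge2 F₀ g a c₀₂ c₁₂ c₀₁) d₀₂ d₁₂ d₀₁
      = G.gauge2 (G.comp F₀' F₀) g a (c₀₂ * G.Ad (G.inv F₀) d₀₂)
          (c₁₂ * G.Ad (G.inv F₁) d₁₂) (c₀₁ * G.Ad (G.inv F₀) d₀₁) := by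
  simp only [gauge1, gauge2, G.Ad_comp, Ad_mul', inv_comp_rev, inv_inv, Ad_inv, ← D_inv, Ad_D,
    Ad_Ad_inv]
  group

end CrossedGroupoid

namespace CrossedGroupoidHom

variable {G H : CrossedGroupoid}

theorem map1_inv (F : CrossedGroupoidHom G H) {x y : G.Obj} (f : G.Hom x y) :
    F.map1 (G.inv f) = H.inv (F.map1 f) := by
  refine (CrossedGroupoid.inv_eq_of_comp_eq_id_left ?_).symm
  rw [← F.map1_comp, G.inv_comp, F.map1_id]

theorem map2_mul' (F : CrossedGroupoidHom G H) {x : G.Obj} (a b : G.G2 x) :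
    F.map2 (a * b) = F.map2 a * F.map2 b :=
  F.map2_mul a b

theorem map1_eq_hcast_of_eq {F F' : CrossedGroupoidHom G H} (h : F = F') {x y : G.Obj}
    (f : G.Hom x y) (ex : F'.obj x = F.obj x) (ey : F'.obj y = F.obj y) :
    F.map1 f = H.hcast ex ey (F'.map1 f) := by
  subst h; rfl

end CrossedGroupoidHom

namespace CosimplicialCrossedGroupoid

variable (G : CosimplicialCrossedGroupoid)

/-- The paper's `f₍ᵢ₎`. -/
def vtxHom {x x' : (G.obj 0).Obj} (f : (G.obj 0).Hom x x') (q : ℕ) (i : Fin (q + 1)) :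
    (G.obj q).Hom (G.X x q i) (G.X x' q i) :=
  (G.map (vtxMap i)).map1 f

def pushHom {x x' : (G.obj 0).Obj} {p q : ℕ} (α : Fin (p + 1) →o Fin (q + 1))
    {i j : Fin (p + 1)} (h : (G.obj p).Hom (G.X x p i) (G.X x' p j)) :
    (G.obj q).Hom (G.X x q (α i)) (G.X x' q (α j)) :=
  (G.obj q).hcast (G.X_push x α i) (G.X_push x' α j) ((G.map α).map1 h)

theorem push1_eq_pushHom {x : (G.obj 0).Obj} {p q : ℕ} (α : Fin (p + 1) →o Fin (q + 1))
    {i j : Fin (p + 1)} (g : (G.obj p).Hom (G.X x p i) (G.X x p j)) :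
    G.push1 α g = G.pushHom α g := rfl

variable {G}

theorem pushHom_comp {x y z : (G.obj 0).Obj} {p q : ℕ} (α : Fin (p + 1) →o Fin (q + 1))
    {i j k : Fin (p + 1)} (h : (G.obj p).Hom (G.X y p j) (G.X z p k))
    (h' : (G.obj p).Hom (G.X x p i) (G.X y p j)) :
    G.pushHom α ((G.obj p).comp h h') = (G.obj q).comp (G.pushHom α h) (G.pushHom α h') := by
  rw [pushHom, (G.map α).map1_comp, (G.obj q).hcast_comp _ (G.X_push y α j)]
  rfl

theorem pushHom_inv {x y : (G.obj 0).Obj} {p q : ℕ} (α : Fin (p + 1) →o Fin (q + 1))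
    {i j : Fin (p + 1)} (h : (G.obj p).Hom (G.X x p i) (G.X y p j)) :
    G.pushHom α ((G.obj p).inv h) = (G.obj q).inv (G.pushHom α h) := by
  rw [pushHom, (G.map α).map1_inv, CrossedGroupoid.hcast_inv]
  rfl

theorem pushHom_D {x : (G.obj 0).Obj} {p q : ℕ} (α : Fin (p + 1) →o Fin (q + 1))
    {i : Fin (p + 1)} (a : (G.obj p).G2 (G.X x p i)) :
    G.pushHom α ((G.obj p).D a) = (G.obj q).D (G.push2 α a) := by
  rw [pushHom, (G.map α).map_D, CrossedGroupoid.hcast_D]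
  rfl

theorem push2_mul {x : (G.obj 0).Obj} {p q : ℕ} (α : Fin (p + 1) →o Fin (q + 1))
    {i : Fin (p + 1)} (a b : (G.obj p).G2 (G.X x p i)) :
    G.push2 α (a * b) = G.push2 α a * G.push2 α b := by
  rw [push2, (G.map α).map2_mul', CrossedGroupoid.cast2_mul]
  rfl

theorem push2_Ad {x y : (G.obj 0).Obj} {p q : ℕ} (α : Fin (p + 1) →o Fin (q + 1))
    {i j : Fin (p + 1)} (h : (G.obj p).Hom (G.X y p i) (G.X x p j))
    (a : (G.obj p).G2 (G.X y p i)) :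
    G.push2 α ((G.obj p).Ad h a) = (G.obj q).Ad (G.pushHom α h) (G.push2 α a) := by
  rw [push2, (G.map α).map_Ad, CrossedGroupoid.cast2_Ad (G.X_push y α i)]
  rfl

theorem vtxHom_comp {x x' x'' : (G.obj 0).Obj} (f : (G.obj 0).Hom x x')
    (f' : (G.obj 0).Hom x' x'') (q : ℕ) (i : Fin (q + 1)) :
    G.vtxHom ((G.obj 0).comp f' f) q i = (G.obj q).comp (G.vtxHom f' q i) (G.vtxHom f q i) :=
  (G.map (vtxMap i)).map1_comp f' f

theorem pushHom_vtxHom {x x' : (G.obj 0).Obj} {p q : ℕ} (α : Fin (p + 1) →o Fin (q + 1))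
    (i : Fin (p + 1)) (f : (G.obj 0).Hom x x') :
    G.pushHom α (G.vtxHom f p i) = G.vtxHom f q (α i) :=
  (CrossedGroupoidHom.map1_eq_hcast_of_eq (G.map_comp α (vtxMap i)) f _ _).symm

theorem push2_mul_Ad_inv_vtxHom {x x' : (G.obj 0).Obj} {p q : ℕ} (α : Fin (p + 1) →o Fin (q + 1))
    {i : Fin (p + 1)} (f : (G.obj 0).Hom x x') (c : (G.obj p).G2 (G.X x p i))
    (c' : (G.obj p).G2 (G.X x' p i)) :
    G.push2 α (c * (G.obj p).Ad ((G.obj p).inv (G.vtxHom f p i)) c')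
      = G.push2 α c * (G.obj q).Ad ((G.obj q).inv (G.vtxHom f q (α i)))
          (G.push2 α c') := by
  rw [push2_mul, push2_Ad, pushHom_inv, pushHom_vtxHom]

variable (G) in
/-- The `g'` of Definition 1.7(i), as `transportA` is the `a'` of (ii). -/
def transportG {x x' : (G.obj 0).Obj} (f : (G.obj 0).Hom x x')
    (g : (G.obj 1).Hom (G.X x 1 0) (G.X x 1 1)) (c : (G.obj 1).G2 (G.X x 1 0)) :
    (G.obj 1).Hom (G.X x' 1 0) (G.X x' 1 1) :=
  (G.obj 1).gauge1 (G.vtxHom f 1 0) (G.vtxHom f 1 1) g c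

theorem isGauge_iff {x x' : (G.obj 0).Obj} {g : (G.obj 1).Hom (G.X x 1 0) (G.X x 1 1)}
    {a : (G.obj 2).G2 (G.X x 2 0)} {g' : (G.obj 1).Hom (G.X x' 1 0) (G.X x' 1 1)}
    {a' : (G.obj 2).G2 (G.X x' 2 0)} {f : (G.obj 0).Hom x x'} {c : (G.obj 1).G2 (G.X x 1 0)} :
    G.IsGauge x g a x' g' a' f c ↔ g' = G.transportG f g c ∧ a' = G.transportA f g a c :=
  Iff.rfl

theorem push1_transportG {x x' : (G.obj 0).Obj} {q : ℕ} (α : Fin 2 →o Fin (q + 1))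
    (f : (G.obj 0).Hom x x') (g : (G.obj 1).Hom (G.X x 1 0) (G.X x 1 1))
    (c : (G.obj 1).G2 (G.X x 1 0)) :
    G.push1 α (G.transportG f g c)
      = (G.obj q).gauge1 (G.vtxHom f q (α 0)) (G.vtxHom f q (α 1)) (G.push1 α g) (G.push2 α c) := by
  simp only [transportG, CrossedGroupoid.gauge1, push1_eq_pushHom, pushHom_comp, pushHom_inv,
    pushHom_D, pushHom_vtxHom]

theorem transportA_eq_gauge2 {x x' : (G.obj 0).Obj} (f : (G.obj 0).Hom x x')
    (g : (G.obj 1).Hom (G.X x 1 0) (G.X x 1 1)) (a : (G.obj 2).G2 (G.X x 2 0))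
    (c : (G.obj 1).G2 (G.X x 1 0)) :
    G.transportA f g a c
      = (G.obj 2).gauge2 (G.vtxHom f 2 0) (G.push1 (edgeMap 0 1 (by decide)) g) a
          (G.push2 (edgeMap 0 2 (by decide)) c) (G.push2 (edgeMap 1 2 (by decide)) c)
          (G.push2 (edgeMap 0 1 (by decide)) c) :=
  rfl

theorem transportG_comp {x x' x'' : (G.obj 0).Obj} (f : (G.obj 0).Hom x x')
    (f' : (G.obj 0).Hom x' x'') (g : (G.obj 1).Hom (G.X x 1 0) (G.X x 1 1))
    (c : (G.obj 1).G2 (G.X x 1 0)) (c' : (G.obj 1).G2 (G.X x' 1 0)) :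
    G.transportG f' (G.transportG f g c) c'
      = G.transportG ((G.obj 0).comp f' f) g
          (c * (G.obj 1).Ad ((G.obj 1).inv (G.vtxHom f 1 0)) c') := by
  rw [transportG, transportG, CrossedGroupoid.gauge1_gauge1, transportG,
    vtxHom_comp, vtxHom_comp]

theorem transportA_comp {x x' x'' : (G.obj 0).Obj} (f : (G.obj 0).Hom x x')
    (f' : (G.obj 0).Hom x' x'') (g : (G.obj 1).Hom (G.X x 1 0) (G.X x 1 1))
    (a : (G.obj 2).G2 (G.X x 2 0)) (c : (G.obj 1).G2 (G.X x 1 0))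
    (c' : (G.obj 1).G2 (G.X x' 1 0)) :
    G.transportA f' (G.transportG f g c) (G.transportA f g a c) c'
      = G.transportA ((G.obj 0).comp f' f) g a
          (c * (G.obj 1).Ad ((G.obj 1).inv (G.vtxHom f 1 0)) c') := by
  rw [transportA_eq_gauge2, transportA_eq_gauge2, push1_transportG]
  refine (CrossedGroupoid.gauge2_gauge2 _ _ _ _ _ _ _ _ _ _ _).trans ?_
  rw [transportA_eq_gauge2, push2_mul_Ad_inv_vtxHom, push2_mul_Ad_inv_vtxHom,
    push2_mul_Ad_inv_vtxHom, vtxHom_comp]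
  -- the vertices `edgeMap i j _ 0` produced above are `i` only up to definitional unfolding
  rfl

end CosimplicialCrossedGroupoid

/-- composition of gauge transformations:
(f' ∘ f, c ∘ Ad(f_(0)⁻¹)(c')) is a gauge transformation (x,g,a) → (x'',g'',a''). -/
theorem gauge_comp (G : CosimplicialCrossedGroupoid) (P P' P'' : G.Desc)
    (f : (G.obj 0).Hom P.x P'.x) (c : (G.obj 1).G2 (G.X P.x 1 0))
    (hfc : G.IsGauge P.x P.g P.a P'.x P'.g P'.a f c)
    (f' : (G.obj 0).Hom P'.x P''.x) (c' : (G.obj 1).G2 (G.X P'.x 1 0))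
    (hfc' : G.IsGauge P'.x P'.g P'.a P''.x P''.g P''.a f' c') :
    G.IsGauge P.x P.g P.a P''.x P''.g P''.a ((G.obj 0).comp f' f)
      ((G.obj 1).mul c ((G.obj 1).Ad ((G.obj 1).inv
        ((G.map (vtxMap (0 : Fin 2))).map1 f)) c')) := by
  rw [CosimplicialCrossedGroupoid.isGauge_iff] at hfc hfc' ⊢
  rw [hfc'.1, hfc'.2, hfc.1, hfc.2]
  exact ⟨G.transportG_comp f f' P.g c c', G.transportA_comp f f' P.g P.a c c'⟩
end

section
/- If F : G → H is a weak equivalence of crossed groupoids, then for all objects x, x' of G the induced map π₁(F, x, x') : G₁(x,x')/G₂(x) → H₁(F(x),F(x'))/H₂(F(x)) on quotients by the right D-action is bijective. -/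
/-! Post-composition with `g₀ : x' ⟶ x''` identifies `π₁(G, x, x')` with `π₁(G, x, x'')`
compatibly with any morphism `F`, because the `𝒢₂(x)`-action is by pre-composition. Hence, when
`x` and `x'` are isomorphic, `π₁(F, x, x')` is conjugate to the bijection `π₁(F, x)`. When they
are not, injectivity of `π₀(F)` shows that both hom-sets, hence both quotients, are empty. -/

namespace CrossedGroupoid

variable {G : CrossedGroupoid}

theorem pi0Rel_equivalence : Equivalence G.pi0Rel where
  refl x := ⟨G.id x⟩
  symm := fun ⟨f⟩ => ⟨G.inv f⟩
  trans := fun ⟨f⟩ ⟨g⟩ => ⟨G.comp g f⟩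

theorem nonempty_hom_of_pi0_eq {x x' : G.Obj}
    (h : (Quot.mk _ x : G.pi0) = Quot.mk _ x') : Nonempty (G.Hom x x') :=
  pi0Rel_equivalence.eqvGen_iff.mp (Quot.eqvGen_exact h)

def pi1'CongrRight {x x' x'' : G.Obj} (g₀ : G.Hom x' x'') : G.pi1' x x' ≃ G.pi1' x x'' where
  toFun := Quot.map (G.comp g₀) (by
    rintro g _ ⟨a, rfl⟩
    exact ⟨a, (G.comp_assoc _ _ _).symm⟩)
  invFun := Quot.map (G.comp (G.inv g₀)) (by
    rintro g _ ⟨a, rfl⟩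
    exact ⟨a, (G.comp_assoc _ _ _).symm⟩)
  left_inv := Quot.ind fun g => congrArg (Quot.mk _) <| by
    rw [← G.comp_assoc, G.inv_comp, G.id_comp]
  right_inv := Quot.ind fun g => congrArg (Quot.mk _) <| by
    rw [← G.comp_assoc, G.comp_inv, G.id_comp]

end CrossedGroupoid

namespace CrossedGroupoidHom

variable {G H : CrossedGroupoid} (F : CrossedGroupoidHom G H)

theorem pi1'map_pi1'CongrRight {x x' x'' : G.Obj} (g₀ : G.Hom x' x'') (p : G.pi1' x x') :
    F.pi1'map x x'' (G.pi1'CongrRight g₀ p) =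
      H.pi1'CongrRight (F.map1 g₀) (F.pi1'map x x' p) :=
  Quot.inductionOn p fun g => congrArg (Quot.mk _) (F.map1_comp g₀ g)

theorem pi1'map_bijective_of_hom {x x' : G.Obj} (g₀ : G.Hom x x')
    (hF : Function.Bijective (F.pi1map x)) : Function.Bijective (F.pi1'map x x') := by
  have hsquare : F.pi1'map x x' ∘ G.pi1'CongrRight g₀ =
      H.pi1'CongrRight (F.map1 g₀) ∘ F.pi1map x :=
    funext (F.pi1'map_pi1'CongrRight g₀)
  rw [← Function.Bijective.of_comp_iff _ (G.pi1'CongrRight g₀).bijective, hsquare]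
  exact (H.pi1'CongrRight (F.map1 g₀)).bijective.comp hF

theorem isEmpty_hom_of_pi0map_injective (hF : Function.Injective F.pi0map) {x x' : G.Obj}
    (h : IsEmpty (G.Hom x x')) : IsEmpty (H.Hom (F.obj x) (F.obj x')) :=
  ⟨fun f => h.elim (G.nonempty_hom_of_pi0_eq (hF (Quot.sound ⟨f⟩))).some⟩

end CrossedGroupoidHom

/-- Lemma 2.6, first part: a weak equivalence of crossed groupoids
induces bijections π₁(G,x,x') → π₁(H,F(x),F(x')). -/
theorem pi1'_bijective {G H : CrossedGroupoid} (F : CrossedGroupoidHom G H)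
    (hF : F.IsWeakEquiv) (x x' : G.Obj) :
    Function.Bijective (F.pi1'map x x') := by
  obtain ⟨hπ₀, hπ₁, -⟩ := hF
  rcases isEmpty_or_nonempty (G.Hom x x') with hG | ⟨⟨g₀⟩⟩
  · have := F.isEmpty_hom_of_pi0map_injective hπ₀.1 hG
    exact ⟨fun p => (Quot.instIsEmpty.false p).elim, fun q => (Quot.instIsEmpty.false q).elim⟩
  · exact F.pi1'map_bijective_of_hom g₀ (hπ₁ x)
end

section
/- If F : G → H is a weak equivalence of crossed groupoids, x, x' are objects of G, and g, g' ∈ G₁(x,x'), then the induced map F : {a ∈ G₂(x) : g' = g ∘ D(a)} → {b ∈ H₂(F(x)) : F(g') = F(g) ∘ D(b)} is bijective. -/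
/-! Put `h = g⁻¹ ∘ g'`. Then `𝒢₂(x)(g, g')` is the fibre of `D` over `h`, a torsor under
`π₂(G, x) = Ker D` when it is nonempty, and `F` maps it to the fibre of `D` over `F h`.
Injectivity of `π₂(F)` makes `F` injective on fibres of `D`. If the target fibre contains some
`b`, then `F h = D b` is trivial in `π₁(H, F x)`, so injectivity of `π₁(F)` shows that `h = D a₀`
for some `a₀`; surjectivity of `π₂(F)` then hits `b` through `(F a₀)⁻¹ b ∈ Ker D`. -/

namespace CrossedGroupoid

variable (G : CrossedGroupoid)

instance inst_s11 (x : G.Obj) : Group (G.G2 x) :=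
  letI : Mul (G.G2 x) := ⟨G.mul⟩
  letI : One (G.G2 x) := ⟨G.one x⟩
  letI : Inv (G.G2 x) := ⟨G.inv2⟩
  Group.ofLeftAxioms G.mul_assoc G.one_mul G.inv2_mul

/-- The set `𝒢₂(x)(g, g')` of the paper. -/
abbrev twistSet {x x' : G.Obj} (g g' : G.Hom x x') : Type :=
  {a : G.G2 x // g' = G.comp g (G.D a)}

variable {G}

theorem eq_comp_iff {x y z : G.Obj} (g : G.Hom y z) (f : G.Hom x y) (h : G.Hom x z) :
    h = G.comp g f ↔ f = G.comp (G.inv g) h := by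
  constructor
  · rintro rfl
    rw [← G.comp_assoc, G.inv_comp, G.id_comp]
  · rintro rfl
    rw [← G.comp_assoc, G.comp_inv, G.id_comp]

theorem D_inv2 {x : G.Obj} (a : G.G2 x) : G.D (G.inv2 a) = G.inv (G.D a) := by
  rw [← G.id_comp (G.inv (G.D a)), ← G.D_one, ← G.inv2_mul a, G.D_mul, G.comp_assoc,
    G.comp_inv, G.comp_id]

theorem homRel_equivalence (x x' : G.Obj) : Equivalence (G.homRel x x') where
  refl g := ⟨G.one x, by rw [G.D_one, G.comp_id]⟩
  symm := by
    rintro g g' ⟨a, rfl⟩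
    exact ⟨G.inv2 a, by rw [D_inv2, G.comp_assoc, G.comp_inv, G.comp_id]⟩
  trans := by
    rintro g g' g'' ⟨a, rfl⟩ ⟨b, rfl⟩
    exact ⟨G.mul a b, by rw [G.D_mul, G.comp_assoc]⟩

theorem homRel_of_mk_eq_mk {x x' : G.Obj} {g g' : G.Hom x x'}
    (h : Quot.mk (G.homRel x x') g = Quot.mk (G.homRel x x') g') : G.homRel x x' g g' :=
  (homRel_equivalence x x').eqvGen_iff.mp (Quot.eqvGen_exact h)

end CrossedGroupoid

namespace CrossedGroupoidHom

open Function

variable {G H : CrossedGroupoid} (F : CrossedGroupoidHom G H) {x : G.Obj}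

def twistMap {x' : G.Obj} (g g' : G.Hom x x') :
    G.twistSet g g' → H.twistSet (F.map1 g) (F.map1 g') :=
  fun a => ⟨F.map2 a.1, (congrArg F.map1 a.2).trans (by rw [F.map1_comp, F.map_D])⟩

theorem eq_of_D_eq_of_map2_eq (hF : Injective (F.pi2map x)) {a a' : G.G2 x}
    (hD : G.D a = G.D a') (h : F.map2 a = F.map2 a') : a = a' := by
  have hker : G.D (G.mul (G.inv2 a) a') = G.id x := by
    rw [G.D_mul, ← hD, ← G.D_mul, G.inv2_mul, G.D_one]
  have hmap : F.pi2map x ⟨_, hker⟩ = F.pi2map x ⟨G.one x, G.D_one x⟩ :=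
    Subtype.ext <| by
      change F.map2 (G.mul (G.inv2 a) a') = F.map2 (G.one x)
      rw [F.map2_mul, ← h, ← F.map2_mul, G.inv2_mul]
  exact inv_mul_eq_one.mp (congrArg Subtype.val (hF hmap))

theorem exists_D_eq_of_map1_eq_D (hF : Injective (F.pi1map x)) {f : G.Hom x x}
    {b : H.G2 (F.obj x)} (h : F.map1 f = H.D b) : ∃ a, G.D a = f := by
  have hmap : F.pi1map x (Quot.mk _ (G.id x)) = F.pi1map x (Quot.mk _ f) := by
    change Quot.mk _ (F.map1 (G.id x)) = Quot.mk _ (F.map1 f)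
    rw [F.map1_id, h]
    exact Quot.sound ⟨b, by rw [H.id_comp]⟩
  obtain ⟨a, ha⟩ := G.homRel_of_mk_eq_mk (hF hmap)
  exact ⟨a, by rw [ha, G.id_comp]⟩

theorem exists_D_eq_map2_eq_of_D_eq (hF : Surjective (F.pi2map x)) (a₀ : G.G2 x)
    {b : H.G2 (F.obj x)} (h : H.D b = H.D (F.map2 a₀)) :
    ∃ a, G.D a = G.D a₀ ∧ F.map2 a = b := by
  have hker : H.D (H.mul (H.inv2 (F.map2 a₀)) b) = H.id (F.obj x) := by
    rw [H.D_mul, h, ← H.D_mul, H.inv2_mul, H.D_one]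
  obtain ⟨⟨e, he⟩, hmap⟩ := hF ⟨_, hker⟩
  refine ⟨G.mul a₀ e, by rw [G.D_mul, he, G.comp_id], ?_⟩
  have hFe : F.map2 e = H.mul (H.inv2 (F.map2 a₀)) b := congrArg Subtype.val hmap
  rw [F.map2_mul, hFe]
  exact mul_inv_cancel_left (F.map2 a₀) b

variable {x' : G.Obj} (g g' : G.Hom x x')

theorem twistMap_injective (hF : Injective (F.pi2map x)) : Injective (F.twistMap g g') := by
  rintro ⟨a, ha⟩ ⟨a', ha'⟩ h
  rw [G.eq_comp_iff] at ha ha'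
  exact Subtype.ext (F.eq_of_D_eq_of_map2_eq hF (ha.trans ha'.symm) (congrArg Subtype.val h))

theorem twistMap_surjective (hF₁ : Injective (F.pi1map x)) (hF₂ : Surjective (F.pi2map x)) :
    Surjective (F.twistMap g g') := by
  rintro ⟨b, hb⟩
  have hFb : F.map1 (G.comp (G.inv g) g') = H.D b := by
    rw [F.map1_comp, hb, ← H.comp_assoc, ← F.map1_comp, G.inv_comp, F.map1_id, H.id_comp]
  obtain ⟨a₀, ha₀⟩ := F.exists_D_eq_of_map1_eq_D hF₁ hFb
  obtain ⟨a, hDa, hFa⟩ :=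
    F.exists_D_eq_map2_eq_of_D_eq hF₂ a₀ (b := b) (by rw [← F.map_D, ha₀, hFb])
  exact ⟨⟨a, (G.eq_comp_iff g _ g').mpr (hDa.trans ha₀)⟩, Subtype.ext hFa⟩

end CrossedGroupoidHom

/-- Lemma 2.6, second part: a weak equivalence induces a bijection
{a ∈ 𝒢₂(x) : g' = g ∘ D(a)} → {b ∈ ℋ₂(F x) : F g' = F g ∘ D(b)}. -/
theorem twist_set_bijective {G H : CrossedGroupoid} (F : CrossedGroupoidHom G H)
    (hF : F.IsWeakEquiv) (x x' : G.Obj) (g g' : G.Hom x x') :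
    Function.Bijective (fun a : {a : G.G2 x // g' = G.comp g (G.D a)} =>
      (⟨F.map2 a.1, (congrArg (fun t => F.map1 t) a.2).trans (by rw [F.map1_comp, F.map_D])⟩ :
        {b : H.G2 (F.obj x) // F.map1 g' = H.comp (F.map1 g) (H.D b)})) :=
  ⟨F.twistMap_injective g g' (hF.2.2 x).1, F.twistMap_surjective g g' (hF.2.1 x).1 (hF.2.2 x).2⟩
end
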